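/- arXiv:1703.04193 — 2 statements merged into one kernel-verified Lean document; each statement's English description precedes it below -/
import Mathlib

section
/- Define U_5 : (Z/2)[[x]] → (Z/2)[[x]] by U_5(Σ c_n x^n) = Σ c_{5n} x^n. Let F = Σ_{k≥0} x^{(2k+1)^2}, G = F(x^5), V' the Z/2-span of the G^k with k odd, and V the Z/2-span of the F^k with k odd. Then U_5 maps V' bijectively onto V and commutes with T_p on V' for every odd prime p ≠ 5. -/
/-!
Substituting `x ↦ x^5` is a ring endomorphism of `(ZMod 2)⟦X⟧` sending `F` to `G`, hence `F^k` to
`G^k`, so `V'` is the image of `V` under it; `U5` is a left inverse of the substitution, which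
gives the bijection. For `p` prime to `5`, `p ∣ 5n ↔ p ∣ n`, so `U5` and `T p` commute
coefficientwise on all power series.
-/

open scoped Classical

noncomputable def F : PowerSeries (ZMod 2) :=
  PowerSeries.mk fun n => if ∃ k, n = (2 * k + 1) ^ 2 then 1 else 0

/-- `G = F(x^5)`. -/
noncomputable def G : PowerSeries (ZMod 2) :=
  PowerSeries.mk fun n => if ∃ k, n = 5 * (2 * k + 1) ^ 2 then 1 else 0

/-- The formal Hecke operator `T_p`. -/
noncomputable def T (p : ℕ) (f : PowerSeries (ZMod 2)) : PowerSeries (ZMod 2) :=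
  PowerSeries.mk fun n =>
    PowerSeries.coeff (p * n) f +
      if p ∣ n then PowerSeries.coeff (n / p) f else 0

/-- `U_5 : Σ c_n x^n ↦ Σ c_{5n} x^n`. -/
noncomputable def U5 (f : PowerSeries (ZMod 2)) : PowerSeries (ZMod 2) :=
  PowerSeries.mk fun n => PowerSeries.coeff (5 * n) f

/-- `V` is the span of the `F^k`, `k` odd. -/
noncomputable def V : Submodule (ZMod 2) (PowerSeries (ZMod 2)) :=
  Submodule.span (ZMod 2) {f | ∃ k, Odd k ∧ f = F ^ k}

/-- `V'` is the span of the `G^k`, `k` odd. -/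
noncomputable def V' : Submodule (ZMod 2) (PowerSeries (ZMod 2)) :=
  Submodule.span (ZMod 2) {f | ∃ k, Odd k ∧ f = G ^ k}

open PowerSeries Set Function

theorem Function.LeftInverse.bijOn_image {α β : Type*} {f : α → β} {g : β → α}
    (h : LeftInverse g f) (s : Set α) : BijOn g (f '' s) s :=
  h.injective.bijOn_image.symm ⟨by rintro _ ⟨x, -, rfl⟩; rw [h x], fun x _ => h x⟩

theorem leftInverse_U5_expand : LeftInverse U5 (expand 5 (by norm_num)) := fun f => by
  ext n
  simp only [U5, coeff_mk, coeff_expand_mul]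

theorem G_eq_expand_F : G = expand 5 (by norm_num) F := by
  ext n
  rw [coeff_expand]
  simp only [G, F, coeff_mk]
  by_cases h5 : 5 ∣ n
  · obtain ⟨m, rfl⟩ := h5
    simp
  · rw [if_neg h5, if_neg]
    rintro ⟨k, rfl⟩
    exact h5 (dvd_mul_right 5 _)

theorem V'_eq_map_expand :
    V' = V.map (expand 5 (by norm_num) : (ZMod 2)⟦X⟧ →ₐ[ZMod 2] _).toLinearMap := by
  rw [V', V, Submodule.map_span]
  congr 1
  ext f
  simp [G_eq_expand_F, eq_comm]

theorem U5_T_of_coprime {p : ℕ} (hp : p.Coprime 5) (f : (ZMod 2)⟦X⟧) :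
    U5 (T p f) = T p (U5 f) := by
  ext n
  simp only [U5, T, coeff_mk, hp.dvd_mul_left, mul_left_comm p 5 n]
  split_ifs with hpn
  · rw [Nat.mul_div_assoc 5 hpn]
  · rfl

theorem stmt_12 :
    Set.BijOn U5 (V' : Set (PowerSeries (ZMod 2))) (V : Set (PowerSeries (ZMod 2))) ∧
    ∀ p : ℕ, p.Prime → Odd p → p ≠ 5 →
      ∀ f ∈ V', U5 (T p f) = T p (U5 f) := by
  refine ⟨?_, fun p hp _ hp5 f _ =>
    U5_T_of_coprime ((Nat.coprime_primes hp (by norm_num)).2 hp5) f⟩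
  rw [V'_eq_map_expand, Submodule.map_coe]
  exact leftInverse_U5_expand.bijOn_image _
end

section
/- Let P = (Z/2)[[t1,t2,t3,t4]] with maximal ideal m, and suppose A, B, C, ε ∈ m with (degree-1) leading forms of A, B, C linearly independent, ε ≡ A mod m^2, and A^2 − ε^2 ∈ (A,B,C). Then A − ε ∈ mA + mB + mC; consequently one can replace A by A + a and ε by ε + c with a ∈ mA + mB, c ∈ mC so that the new A equals the new ε. -/
/-!
Because `A`, `B`, `C` have independent linear parts, they can be completed by a fourth element
`D` to a system whose linear parts span the cotangent space, so by Nakayama the maximal ideal of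
the Noetherian local ring `P ⧸ (A, B, C)` is generated by the image of `D`. By Krull's height
theorem this quotient has dimension at least `4 - 3 = 1`, so its generator is not nilpotent; the
Krull intersection theorem then writes every nonzero element as a unit times a power of it, which
makes the quotient a domain. Hence `(A, B, C)` is prime, and in characteristic 2 the hypothesis
says `(A - ε) ^ 2 ∈ (A, B, C)`, so `A - ε = u A + v B + w C`. Comparing linear parts, which vanish
on `m ^ 2`, the independence forces `u, v, w ∈ m`.
-/

/-- The 4-variable power series ring `P = (Z/2)[[t1,t2,t3,t4]]`. -/
abbrev P : Type := MvPowerSeries (Fin 4) (ZMod 2)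

/-- The maximal ideal `m` of `P`. -/
noncomputable def m : Ideal P := IsLocalRing.maximalIdeal P

/-- The degree-1 part of a power series, as a linear form. -/
noncomputable def linPart (A : P) : Fin 4 → ZMod 2 :=
  fun i => MvPowerSeries.coeff (Finsupp.single i 1) A

open IsLocalRing MvPowerSeries

section LocalRing

variable {R : Type*} [CommRing R] [IsNoetherianRing R] [IsLocalRing R] {t : R}

theorem IsLocalRing.exists_eq_pow_mul_of_maximalIdeal_eq_span_singleton
    (ht : maximalIdeal R = Ideal.span {t}) {x : R} (hx : x ≠ 0) :
    ∃ (k : ℕ) (u : R), IsUnit u ∧ x = t ^ k * u := by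
  have hpow (n : ℕ) : maximalIdeal R ^ n = Ideal.span {t ^ n} := by
    rw [ht, Ideal.span_singleton_pow]
  have hex : ∃ n, x ∉ maximalIdeal R ^ n := by
    by_contra! h
    exact hx (by simpa [Ideal.iInf_pow_eq_bot_of_isLocalRing _ (maximalIdeal.isMaximal R).ne_top]
      using Ideal.mem_iInf.mpr h)
  classical
  obtain ⟨k, hk⟩ : ∃ k, Nat.find hex = k + 1 :=
    Nat.exists_eq_succ_of_ne_zero fun h0 ↦ Nat.find_spec hex (by simp [h0])
  have hxk : x ∈ Ideal.span {t ^ k} := hpow k ▸ not_not.mp (Nat.find_min hex (by omega))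
  obtain ⟨u, rfl⟩ := Ideal.mem_span_singleton'.mp hxk
  refine ⟨k, u, ?_, mul_comm _ _⟩
  by_contra hu
  obtain ⟨v, rfl⟩ := Ideal.mem_span_singleton'.mp (ht ▸ (mem_maximalIdeal u).mpr hu)
  apply Nat.find_spec hex
  rw [hk, hpow, Ideal.mem_span_singleton']
  exact ⟨v, by ring⟩

theorem IsLocalRing.isDomain_of_maximalIdeal_eq_span_singleton
    (ht : maximalIdeal R = Ideal.span {t}) (hdim : ¬ Ring.KrullDimLE 0 R) : IsDomain R := by
  have ht_nil : ¬ IsNilpotent t := by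
    intro hnil
    have hle : maximalIdeal R ≤ nilradical R := by
      rwa [ht, Ideal.span_singleton_le_iff_mem]
    have : (nilradical R).IsMaximal := by
      rw [le_antisymm (nilradical_le_prime _) hle]
      infer_instance
    exact hdim (Ring.KrullDimLE.of_isMaximal_nilradical R)
  have : NoZeroDivisors R := by
    refine ⟨fun {x y} hxy ↦ ?_⟩
    by_contra! h
    obtain ⟨k, u, hu, rfl⟩ := exists_eq_pow_mul_of_maximalIdeal_eq_span_singleton ht h.1
    obtain ⟨l, v, hv, rfl⟩ := exists_eq_pow_mul_of_maximalIdeal_eq_span_singleton ht h.2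
    refine ht_nil ⟨k + l, ?_⟩
    rw [show t ^ k * u * (t ^ l * v) = t ^ (k + l) * (u * v) by ring] at hxy
    exact (hu.mul hv).mul_left_eq_zero.mp hxy
  exact NoZeroDivisors.to_isDomain R

theorem Ideal.isPrime_of_maximalIdeal_le_span_singleton_sup {I : Ideal R}
    (ht : t ∈ maximalIdeal R) (hm : maximalIdeal R ≤ Ideal.span {t} ⊔ I ⊔ maximalIdeal R ^ 2)
    (hdim : ¬ Ring.KrullDimLE 0 (R ⧸ I)) : I.IsPrime := by
  have hI : I ≠ ⊤ := by
    rintro rfl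
    exact hdim inferInstance
  have := Ideal.Quotient.nontrivial_iff.mpr hI
  have := IsLocalRing.of_surjective' (Ideal.Quotient.mk I) Ideal.Quotient.mk_surjective
  have hm' : maximalIdeal R ≤ Ideal.span {t} ⊔ I := by
    refine Submodule.le_of_le_smul_of_le_jacobson_bot (IsNoetherian.noetherian _)
      (maximalIdeal_le_jacobson _) ?_
    simpa [pow_two] using hm
  have hmax : maximalIdeal (R ⧸ I) = Ideal.span {Ideal.Quotient.mk I t} := by
    rw [← map_maximalIdeal_of_surjective _ Ideal.Quotient.mk_surjective]
    refine le_antisymm ?_ ?_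
    · grw [hm', Ideal.map_sup, Ideal.map_span, Ideal.map_quotient_self]
      simp
    · rw [Ideal.span_singleton_le_iff_mem]
      exact Ideal.mem_map_of_mem _ ht
  have := isDomain_of_maximalIdeal_eq_span_singleton hmax hdim
  exact (Ideal.Quotient.isDomain_iff_prime I).mp this

theorem not_krullDimLE_zero_quotient_span {s : Set R} (hs : s ⊆ maximalIdeal R)
    (hcard : (s.encard : WithBot ℕ∞) < ringKrullDim R) :
    ¬ Ring.KrullDimLE 0 (R ⧸ Ideal.span s) := by
  intro h0
  have := ringKrullDim_le_ringKrullDim_quotient_add_encard _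
    (hs.trans (IsLocalRing.ringJacobson_eq_maximalIdeal R).ge)
  grw [(Ring.krullDimLE_iff).mp h0] at this
  norm_num at this
  exact this.not_gt hcard

end LocalRing

theorem ringKrullDim_add_le_ringKrullDim_mvPowerSeries {R : Type*} [CommRing R] (n : ℕ) :
    ringKrullDim R + n ≤ ringKrullDim (MvPowerSeries (Fin n) R) := by
  induction n with
  | zero =>
    simpa using ringKrullDim_le_of_surjective (MvPowerSeries.constantCoeff (σ := Fin 0) (R := R))
      fun r ↦ ⟨MvPowerSeries.C r, MvPowerSeries.constantCoeff_C _⟩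
  | succ n ih =>
    rw [ringKrullDim_eq_of_ringEquiv (MvPowerSeries.finSuccEquiv R n).toRingEquiv]
    grw [← ringKrullDim_succ_le_ringKrullDim_powerseries, ← ih]
    push_cast
    rw [add_assoc]

namespace MvPowerSeries

theorem mem_maximalIdeal_iff {σ k : Type*} [Field k] {f : MvPowerSeries σ k} :
    f ∈ maximalIdeal (MvPowerSeries σ k) ↔ constantCoeff f = 0 := by
  rw [mem_maximalIdeal, mem_nonunits_iff, isUnit_iff_constantCoeff, isUnit_iff_ne_zero, not_not]

variable {σ R : Type*} [CommRing R]

theorem mem_ideal_span_X_image_of_coeff_eq_zero (s : Finset σ) {f : MvPowerSeries σ R}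
    (hf : ∀ d : σ →₀ ℕ, (∀ i ∈ s, d i = 0) → coeff d f = 0) :
    f ∈ Ideal.span (X '' s) := by
  classical
  induction s using Finset.induction_on generalizing f with
  | empty => simp [show f = 0 from ext fun d ↦ by simpa using hf d]
  | insert i s hi ih =>
    let g : MvPowerSeries σ R := fun d ↦ if d i = 0 then coeff d f else 0
    have hg : g ∈ Ideal.span (X '' s) := ih fun d hd ↦ by
      change (if d i = 0 then coeff d f else 0) = 0
      split_ifs with hdi
      · exact hf d (Finset.forall_mem_insert _ _ _ |>.mpr ⟨hdi, hd⟩)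
      · rfl
    obtain ⟨h, hh⟩ : X i ∣ f - g := X_dvd_iff.mpr fun d hd ↦ by
      change coeff d f - (if d i = 0 then coeff d f else 0) = 0
      simp [hd]
    rw [show f = X i * h + g by rw [← hh]; ring, Finset.coe_insert, Set.image_insert_eq,
      Ideal.span_insert]
    exact Submodule.add_mem_sup (Ideal.mul_mem_right _ _ (Ideal.mem_span_singleton_self _)) hg

theorem mem_ideal_span_range_X_of_constantCoeff_eq_zero [Fintype σ] {f : MvPowerSeries σ R}
    (hf : constantCoeff f = 0) : f ∈ Ideal.span (Set.range X) := by
  simpa using mem_ideal_span_X_image_of_coeff_eq_zero Finset.univ (f := f) fun d hd ↦ by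
    rw [show d = 0 from Finsupp.ext fun i ↦ hd i (Finset.mem_univ i),
      coeff_zero_eq_constantCoeff_apply, hf]

end MvPowerSeries

theorem mem_m_iff {f : P} : f ∈ m ↔ constantCoeff f = 0 :=
  mem_maximalIdeal_iff

theorem linPart_eq_constantCoeff_pderiv (f : P) (i : Fin 4) :
    linPart f i = constantCoeff (pderiv (ZMod 2) i f) := by
  simp [linPart, ← coeff_zero_eq_constantCoeff_apply, coeff_pderiv]

theorem linPart_add (f g : P) : linPart (f + g) = linPart f + linPart g := by
  funext i
  simp [linPart]

theorem linPart_sub (f g : P) : linPart (f - g) = linPart f - linPart g := by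
  funext i
  simp [linPart]

theorem linPart_mul (f g : P) :
    linPart (f * g) = constantCoeff f • linPart g + constantCoeff g • linPart f := by
  funext i
  simp [linPart_eq_constantCoeff_pderiv, Derivation.leibniz]

theorem linPart_X (i : Fin 4) : linPart (X i) = Pi.single i 1 := by
  funext j
  simp [linPart_eq_constantCoeff_pderiv, pderiv_X, Pi.single_apply, eq_comm]

theorem linPart_sum_mul {ι : Type*} (s : Finset ι) (c L : ι → P)
    (hL : ∀ i, constantCoeff (L i) = 0) :
    linPart (∑ i ∈ s, c i * L i) = ∑ i ∈ s, constantCoeff (c i) • linPart (L i) := by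
  classical
  induction s using Finset.induction_on with
  | empty => funext; simp [linPart]
  | insert i s hi ih => simp [Finset.sum_insert hi, linPart_add, linPart_mul, hL, ih]

theorem linPart_eq_zero_of_mem_sq {f : P} (hf : f ∈ m ^ 2) : linPart f = 0 := by
  rw [pow_two] at hf
  refine Submodule.mul_induction_on hf (fun f hf g hg ↦ ?_) fun f g hf hg ↦ ?_
  · rw [mem_m_iff] at hf hg
    simp [linPart_mul, hf, hg]
  · rw [linPart_add, hf, hg, add_zero]

theorem mem_sq_of_linPart_eq_zero {f : P} (hf : f ∈ m) (hlin : linPart f = 0) : f ∈ m ^ 2 := by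
  obtain ⟨c, rfl⟩ := Ideal.mem_span_range_iff_exists_fun.mp
    (mem_ideal_span_range_X_of_constantCoeff_eq_zero (mem_m_iff.mp hf))
  rw [linPart_sum_mul _ _ _ constantCoeff_X] at hlin
  rw [pow_two]
  refine Ideal.sum_mem _ fun i _ ↦ Ideal.mul_mem_mul ?_ (mem_m_iff.mpr (constantCoeff_X i))
  simpa [mem_m_iff, linPart_X, Pi.single_apply] using congrFun hlin i

theorem exists_mem_m_linPart_eq (v : Fin 4 → ZMod 2) : ∃ D ∈ m, linPart D = v := by
  refine ⟨∑ i, C (v i) * X i, mem_m_iff.mpr (by simp), ?_⟩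
  rw [linPart_sum_mul _ _ _ constantCoeff_X]
  ext j
  simp [linPart_X, Pi.single_apply]

theorem m_le_span_sup_sq {ι : Type*} [Fintype ι] {L : ι → P} (hL : ∀ i, L i ∈ m)
    (hspan : Submodule.span (ZMod 2) (Set.range (linPart ∘ L)) = ⊤) :
    m ≤ Ideal.span (Set.range L) ⊔ m ^ 2 := by
  intro f hf
  obtain ⟨c, hc⟩ := (Submodule.mem_span_range_iff_exists_fun (ZMod 2)).mp
    (hspan ▸ Submodule.mem_top (x := linPart f))
  have hg : ∑ i, C (c i) * L i ∈ Ideal.span (Set.range L) :=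
    Ideal.sum_mem _ fun i _ ↦ Ideal.mul_mem_left _ _ (Ideal.subset_span ⟨i, rfl⟩)
  have hlin : linPart (f - ∑ i, C (c i) * L i) = 0 := by
    rw [linPart_sub, linPart_sum_mul _ _ _ fun i ↦ mem_m_iff.mp (hL i)]
    simpa [sub_eq_zero] using hc.symm
  have hrest := mem_sq_of_linPart_eq_zero
    (sub_mem hf (Ideal.sum_mem _ fun i _ ↦ Ideal.mul_mem_left _ _ (hL i))) hlin
  simpa using Submodule.add_mem_sup hg hrest

theorem mem_m_of_sum_mul_mem_sq {ι : Type*} [Fintype ι] {c L : ι → P} (hL : ∀ i, L i ∈ m)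
    (hind : LinearIndependent (ZMod 2) (linPart ∘ L)) (h : ∑ i, c i * L i ∈ m ^ 2) (i : ι) :
    c i ∈ m := by
  have hlin := linPart_eq_zero_of_mem_sq h
  rw [linPart_sum_mul _ _ _ fun i ↦ mem_m_iff.mp (hL i)] at hlin
  exact mem_m_iff.mpr (Fintype.linearIndependent_iff.mp hind _ hlin i)

theorem four_le_ringKrullDim_P : (4 : WithBot ℕ∞) ≤ ringKrullDim P := by
  simpa [ringKrullDim_eq_zero_of_field] using
    ringKrullDim_add_le_ringKrullDim_mvPowerSeries (R := ZMod 2) 4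

theorem isPrime_span_range_of_linearIndependent_linPart {L : Fin 3 → P} (hL : ∀ i, L i ∈ m)
    (hind : LinearIndependent (ZMod 2) (linPart ∘ L)) : (Ideal.span (Set.range L)).IsPrime := by
  obtain ⟨v, hv⟩ := exists_linearIndependent_cons_of_lt_finrank hind (by simp)
  obtain ⟨D, hD, rfl⟩ := exists_mem_m_linPart_eq v
  have hspan : Submodule.span (ZMod 2) (Set.range (linPart ∘ Fin.cons D L)) = ⊤ := by
    rw [Fin.comp_cons]
    exact hv.span_eq_top_of_card_eq_finrank' (Module.finrank_fin_fun _).symm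
  have hm := m_le_span_sup_sq (L := Fin.cons D L) (Fin.cases hD hL) hspan
  rw [Fin.range_cons, Ideal.span_insert] at hm
  refine Ideal.isPrime_of_maximalIdeal_le_span_singleton_sup hD hm ?_
  refine not_krullDimLE_zero_quotient_span (Set.range_subset_iff.mpr hL) ?_
  calc ((Set.range L).encard : WithBot ℕ∞) ≤ 3 := WithBot.coe_le_coe.mpr <| by
        rw [← Set.image_univ]
        exact (Set.encard_image_le L _).trans (by simp)
    _ < 4 := by norm_num
    _ ≤ ringKrullDim P := four_le_ringKrullDim_P

theorem stmt_18_general (A B C ε : P)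
    (hA : A ∈ m) (hB : B ∈ m) (hC : C ∈ m)
    (hind : LinearIndependent (ZMod 2) ![linPart A, linPart B, linPart C])
    (hεA : ε - A ∈ m ^ 2)
    (hsq : A ^ 2 - ε ^ 2 ∈ Ideal.span {A, B, C}) :
    A - ε ∈ m * Ideal.span {A, B, C} ∧
    ∃ a ∈ m * Ideal.span {A, B}, ∃ c ∈ m * Ideal.span {C}, A + a = ε + c := by
  have hrange : Set.range ![A, B, C] = {A, B, C} := by
    simp only [Matrix.range_cons, Matrix.range_empty, Set.union_empty, Set.singleton_union]
  have hL : ∀ i, ![A, B, C] i ∈ m := Fin.cases hA (Fin.cases hB (Fin.cases hC finZeroElim))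
  have hind' : LinearIndependent (ZMod 2) (linPart ∘ ![A, B, C]) := by
    convert hind using 1
    funext i
    fin_cases i <;> rfl
  have := charP_of_injective_algebraMap (R := ZMod 2) (A := P) C_injective 2
  have hmem : A - ε ∈ Ideal.span (Set.range ![A, B, C]) :=
    (isPrime_span_range_of_linearIndependent_linPart hL hind').mem_of_pow_mem 2
      (by rwa [sub_pow_char, hrange])
  obtain ⟨c, hc⟩ := Ideal.mem_span_range_iff_exists_fun.mp hmem
  have hcm := mem_m_of_sum_mul_mem_sq hL hind' (by rw [hc, ← neg_sub]; exact neg_mem hεA)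
  refine ⟨hc ▸ Ideal.sum_mem _ fun i _ ↦ Ideal.mul_mem_mul (hcm i)
    (hrange ▸ Ideal.subset_span ⟨i, rfl⟩), -(c 0 * A + c 1 * B), ?_, c 2 * C,
    Ideal.mul_mem_mul (hcm 2) (Ideal.mem_span_singleton_self C), ?_⟩
  · exact neg_mem (add_mem (Ideal.mul_mem_mul (hcm 0) (Ideal.subset_span (by simp)))
      (Ideal.mul_mem_mul (hcm 1) (Ideal.subset_span (by simp))))
  · simp only [Fin.sum_univ_three, Matrix.cons_val_zero, Matrix.cons_val_one,
      Matrix.cons_val_two, Matrix.tail_cons, Matrix.head_cons] at hc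
    linear_combination -hc

theorem stmt_18 (A B C ε : P)
    (hA : A ∈ m) (hB : B ∈ m) (hC : C ∈ m) (hε : ε ∈ m)
    (hind : LinearIndependent (ZMod 2) ![linPart A, linPart B, linPart C])
    (hεA : ε - A ∈ m ^ 2)
    (hsq : A ^ 2 - ε ^ 2 ∈ Ideal.span {A, B, C}) :
    A - ε ∈ m * Ideal.span {A, B, C} ∧
    ∃ a ∈ m * Ideal.span {A, B}, ∃ c ∈ m * Ideal.span {C}, A + a = ε + c :=
  stmt_18_general A B C ε hA hB hC hind hεA hsq
end
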